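/- arXiv:1903.10008 — 11 statements merged into one kernel-verified Lean document; each statement's English description precedes it below -/
import Mathlib

section
/- For all natural numbers m ≥ 3 and all natural numbers p_f, p_d, l_f, l_a satisfying the balance equation 3·p_f + p_d + 4·l_f + 2·l_a + 6·m = m·(2·p_f + p_d + 2·l_f + l_a) + 7, the total number of points satisfies p_f + p_d ≡ 5 (mod m − 2). -/
/-- For `m ≥ 3` and naturals satisfying the balance equation, the total number
of points satisfies `p_f + p_d ≡ 5 (mod m − 2)`. -/
theorem balance_mod (m pf pd lf la : ℕ) (hm : 3 ≤ m)
    (hbal : 3 * pf + pd + 4 * lf + 2 * la + 6 * m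
      = m * (2 * pf + pd + 2 * lf + la) + 7) :
    pf + pd ≡ 5 [MOD m - 2] := by
  rw [Nat.modEq_iff_dvd]
  have h2 : ((m - 2 : ℕ) : ℤ) = (m : ℤ) - 2 := by
    have := Nat.cast_sub (show 2 ≤ m by omega) (R := ℤ)
    simpa using this
  have hb : (3 * pf + pd + 4 * lf + 2 * la + 6 * m : ℤ)
      = (m : ℤ) * (2 * pf + pd + 2 * lf + la) + 7 := by exact_mod_cast hbal
  refine ⟨(2 * pf + pd + 2 * lf + la : ℤ) - 6, ?_⟩
  push_cast
  rw [h2]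
  linear_combination hb
end

section
/- Every balanced point-line problem with at least five points has exactly two cameras: for all natural numbers m ≥ 2 and p_f, p_d, l_f, l_a satisfying the balance equation 3·p_f + p_d + 4·l_f + 2·l_a + 6·m = m·(2·p_f + p_d + 2·l_f + l_a) + 7 and the constraint that p_d ≥ 1 implies p_f ≥ 2, if p_f + p_d ≥ 5 then m = 2. -/
/-- Every balanced point-line problem with at least five points has exactly two
cameras. -/
theorem balanced_five_points_two_cameras (m pf pd lf la : ℕ) (hm : 2 ≤ m)
    (hbal : 3 * pf + pd + 4 * lf + 2 * la + 6 * m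
      = m * (2 * pf + pd + 2 * lf + la) + 7)
    (hdep : 1 ≤ pd → 2 ≤ pf)
    (hpoints : 5 ≤ pf + pd) :
    m = 2 := by
  by_contra h
  have hm3 : 3 ≤ m := by omega
  set S := 2 * pf + pd + 2 * lf + la with hS
  have key : 6 * m - 7 = (m - 2) * S + (pf + pd) := by
    have : S ≥ 0 := by positivity
    zify [hm, show 7 ≤ 6 * m by omega] at hbal ⊢
    push_cast [hS] at hbal ⊢
    ring_nf
    ring_nf at hbal
    linarith
  have hS6 : S ≤ 6 := by
    by_contra hS7
    push_neg at hS7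
    have : (m - 2) * S ≥ (m - 2) * 7 := Nat.mul_le_mul_left _ (by omega)
    omega
  have hpf : pf ≤ 1 := by omega
  have hpd : pd = 0 := by omega
  omega
end

section
/- For all natural numbers m ≥ 2 and p_f, p_d, l_f, l_a satisfying the balance equation 3·p_f + p_d + 4·l_f + 2·l_a + 6·m = m·(2·p_f + p_d + 2·l_f + l_a) + 7, if p_f + p_d ≥ 5 then, as integers, (p_f − 1)·m ≤ 2·(p_f − 1). -/
/-- Intermediate inequality in the proof of Lemma 5: if a balanced point-line
problem has at least five points then `(p_f − 1)·m ≤ 2·(p_f − 1)` as integers. -/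
theorem balanced_five_points_ineq (m pf pd lf la : ℕ) (hm : 2 ≤ m)
    (hbal : 3 * pf + pd + 4 * lf + 2 * la + 6 * m
      = m * (2 * pf + pd + 2 * lf + la) + 7)
    (hpoints : 5 ≤ pf + pd) :
    ((pf : ℤ) - 1) * (m : ℤ) ≤ 2 * ((pf : ℤ) - 1) := by
  have hm' : (2:ℤ) ≤ (m:ℤ) := by exact_mod_cast hm
  have hp' : (5:ℤ) ≤ (pf:ℤ) + pd := by exact_mod_cast hpoints
  have hb : (3:ℤ) * pf + pd + 4 * lf + 2 * la + 6 * m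
      = m * (2 * pf + pd + 2 * lf + la) + 7 := by exact_mod_cast hbal
  nlinarith [mul_nonneg (by linarith : (0:ℤ) ≤ (m:ℤ) - 2) (by positivity : (0:ℤ) ≤ 2*(lf:ℤ) + la),
    mul_nonneg (by linarith : (0:ℤ) ≤ (m:ℤ) - 2) (by linarith : (0:ℤ) ≤ (pf:ℤ) + pd - 5)]
end

section
/- For all natural numbers m ≥ 8 and all natural numbers p_f, p_d, l_f, l_a satisfying the balance equation 3·p_f + p_d + 4·l_f + 2·l_a + 6·m = m·(2·p_f + p_d + 2·l_f + l_a) + 7, the total number of points satisfies p_f + p_d ≥ 5. -/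
/-- For `m ≥ 8`, any solution of the balance equation has at least five points. -/
theorem balanced_eight_cameras_five_points (m pf pd lf la : ℕ) (hm : 8 ≤ m)
    (hbal : 3 * pf + pd + 4 * lf + 2 * la + 6 * m
      = m * (2 * pf + pd + 2 * lf + la) + 7) :
    5 ≤ pf + pd := by
  by_contra h
  push_neg at h
  set t := 2 * pf + pd + 2 * lf + la with ht
  have h1 : m * t + 7 + (pf + pd) = 2 * t + 6 * m := by omega
  have h2 : t ≤ 6 := by nlinarith
  nlinarith
end

section
/- There is no balanced point-line problem with seven or more cameras: there exist no natural numbers m ≥ 7 and p_f, p_d, l_f, l_a such that the balance equation 3·p_f + p_d + 4·l_f + 2·l_a + 6·m = m·(2·p_f + p_d + 2·l_f + l_a) + 7 holds together with the combinatorial constraints that p_d ≥ 1 implies p_f ≥ 2 and that l_a ≥ 1 implies p_f + p_d ≥ 1. -/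
/-- There is no balanced point-line problem with seven or more cameras. -/
theorem no_balanced_seven_cameras :
    ¬ ∃ (m pf pd lf la : ℕ), 7 ≤ m ∧
      3 * pf + pd + 4 * lf + 2 * la + 6 * m
        = m * (2 * pf + pd + 2 * lf + la) + 7 ∧
      (1 ≤ pd → 2 ≤ pf) ∧
      (1 ≤ la → 1 ≤ pf + pd) := by
  rintro ⟨m, pf, pd, lf, la, hm, heq, h1, h2⟩
  -- First, bound the "image size" n = 2*pf + pd + 2*lf + la by 7:
  -- from the balance equation, m * n + 7 ≤ 2 * n + 6 * m, and with m ≥ 7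
  -- the product (m - 6) * (n - 8) ≥ 0 would force a contradiction if n ≥ 8.
  have h7 : 2 * pf + pd + 2 * lf + la ≤ 7 := by
    by_contra h
    push_neg at h
    have hm' : (7 : ℤ) ≤ (m : ℤ) := by exact_mod_cast hm
    have h' : (8 : ℤ) ≤ 2 * pf + pd + 2 * lf + la := by exact_mod_cast h
    have heq' : (3 * pf + pd + 4 * lf + 2 * la + 6 * m : ℤ)
        = m * (2 * pf + pd + 2 * lf + la) + 7 := by exact_mod_cast heq
    nlinarith [mul_nonneg (by linarith : (0:ℤ) ≤ (m:ℤ) - 6)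
      (by linarith : (0:ℤ) ≤ (2 * pf + pd + 2 * lf + la : ℤ) - 8)]
  -- Now case on the finitely many values of n; each case is linear.
  set k := 2 * pf + pd + 2 * lf + la with hk
  interval_cases k <;> omega
end

section
/- The balanced point-line problems with six cameras are exactly three: for m = 6, the natural numbers p_f, p_d, l_f, l_a satisfy the balance equation 3·p_f + p_d + 4·l_f + 2·l_a + 6·m = m·(2·p_f + p_d + 2·l_f + l_a) + 7 together with the constraints (p_d ≥ 1 → p_f ≥ 2) and (l_a ≥ 1 → p_f + p_d ≥ 1) if and only if (p_f, p_d, l_f, l_a) ∈ {(1,0,2,1), (1,0,1,3), (1,0,0,5)}. -/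
set_option maxHeartbeats 1000000 in
/-- The balanced point-line problems with six cameras are exactly three. -/
theorem balanced_six_cameras (pf pd lf la : ℕ) :
    (3 * pf + pd + 4 * lf + 2 * la + 6 * 6
        = 6 * (2 * pf + pd + 2 * lf + la) + 7 ∧
      (1 ≤ pd → 2 ≤ pf) ∧
      (1 ≤ la → 1 ≤ pf + pd))
    ↔ (pf, pd, lf, la) ∈ ({(1,0,2,1), (1,0,1,3), (1,0,0,5)} :
        Set (ℕ × ℕ × ℕ × ℕ)) := by
  simp only [Set.mem_insert_iff, Set.mem_singleton_iff, Prod.mk.injEq]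
  constructor
  · rintro ⟨h, h1, h2⟩
    have hpf : pf ≤ 3 := by omega
    have hlf : lf ≤ 3 := by omega
    interval_cases pf <;> interval_cases lf <;> omega
  · rintro (⟨a,b,c,d⟩ | ⟨a,b,c,d⟩ | ⟨a,b,c,d⟩) <;> subst a <;> subst b <;> subst c <;> subst d <;> norm_num
end

section
/- The balanced point-line problems with five cameras correspond to exactly two parameter tuples: for m = 5, the natural numbers p_f, p_d, l_f, l_a satisfy the balance equation 3·p_f + p_d + 4·l_f + 2·l_a + 6·m = m·(2·p_f + p_d + 2·l_f + l_a) + 7 together with the constraints (p_d ≥ 1 → p_f ≥ 2) and (l_a ≥ 1 → p_f + p_d ≥ 1) if and only if (p_f, p_d, l_f, l_a) ∈ {(2,0,1,1), (2,0,0,3)}. -/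
/-- The balanced point-line problems with five cameras correspond to exactly
two parameter tuples. -/
theorem balanced_five_cameras (pf pd lf la : ℕ) :
    (3 * pf + pd + 4 * lf + 2 * la + 6 * 5
        = 5 * (2 * pf + pd + 2 * lf + la) + 7 ∧
      (1 ≤ pd → 2 ≤ pf) ∧
      (1 ≤ la → 1 ≤ pf + pd))
    ↔ (pf, pd, lf, la) ∈ ({(2,0,1,1), (2,0,0,3)} :
        Set (ℕ × ℕ × ℕ × ℕ)) := by
  simp only [Set.mem_insert_iff, Set.mem_singleton_iff, Prod.mk.injEq]
  omega
end

section
/- The balanced point-line problems with four cameras correspond to exactly seven parameter tuples: for m = 4, the natural numbers p_f, p_d, l_f, l_a satisfy the balance equation 3·p_f + p_d + 4·l_f + 2·l_a + 6·m = m·(2·p_f + p_d + 2·l_f + l_a) + 7 together with the constraints (p_d ≥ 1 → p_f ≥ 2) and (l_a ≥ 1 → p_f + p_d ≥ 1) if and only if (p_f, p_d, l_f, l_a) ∈ {(1,0,3,0), (1,0,2,2), (1,0,1,4), (1,0,0,6), (3,0,0,1), (2,1,1,0), (2,1,0,2)}. -/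
set_option maxHeartbeats 1000000 in
/-- The balanced point-line problems with four cameras correspond to exactly
seven parameter tuples. -/
theorem balanced_four_cameras (pf pd lf la : ℕ) :
    (3 * pf + pd + 4 * lf + 2 * la + 6 * 4
        = 4 * (2 * pf + pd + 2 * lf + la) + 7 ∧
      (1 ≤ pd → 2 ≤ pf) ∧
      (1 ≤ la → 1 ≤ pf + pd))
    ↔ (pf, pd, lf, la) ∈ ({(1,0,3,0), (1,0,2,2), (1,0,1,4), (1,0,0,6),
        (3,0,0,1), (2,1,1,0), (2,1,0,2)} : Set (ℕ × ℕ × ℕ × ℕ)) := by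
  simp only [Set.mem_insert_iff, Set.mem_singleton_iff, Prod.mk.injEq]
  constructor
  · rintro ⟨h, h1, h2⟩
    have h17 : 5*pf+3*pd+4*lf+2*la = 17 := by omega
    have hpf : pf ≤ 3 := by omega
    have hpd : pd ≤ 5 := by omega
    have hlf : lf ≤ 4 := by omega
    have hla : la ≤ 8 := by omega
    clear h
    interval_cases pf <;> interval_cases pd <;> interval_cases lf <;>
      interval_cases la <;> first | (exfalso; omega) | decide
  · rintro (⟨h1,h2,h3,h4⟩|⟨h1,h2,h3,h4⟩|⟨h1,h2,h3,h4⟩|⟨h1,h2,h3,h4⟩|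
      ⟨h1,h2,h3,h4⟩|⟨h1,h2,h3,h4⟩|⟨h1,h2,h3,h4⟩) <;> subst h1 <;> subst h2 <;>
      subst h3 <;> subst h4 <;> refine ⟨by norm_num, by norm_num, by norm_num⟩
end

section
/- The balanced point-line problems with three cameras correspond to exactly fourteen parameter tuples: for m = 3, the natural numbers p_f, p_d, l_f, l_a satisfy the balance equation 3·p_f + p_d + 4·l_f + 2·l_a + 6·m = m·(2·p_f + p_d + 2·l_f + l_a) + 7 together with the constraints (p_d ≥ 1 → p_f ≥ 2) and (l_a ≥ 1 → p_f + p_d ≥ 1) if and only if (p_f, p_d, l_f, l_a) ∈ {(1,0,4,0), (1,0,3,2), (1,0,2,4), (1,0,1,6), (1,0,0,8), (2,0,2,1), (2,0,1,3), (2,0,0,5), (3,0,1,0), (3,0,0,2), (2,1,1,1), (2,1,0,3), (3,1,0,0), (2,2,0,1)}. -/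
set_option maxHeartbeats 1000000 in
/-- The balanced point-line problems with three cameras correspond to exactly
fourteen parameter tuples. -/
theorem balanced_three_cameras (pf pd lf la : ℕ) :
    (3 * pf + pd + 4 * lf + 2 * la + 6 * 3
        = 3 * (2 * pf + pd + 2 * lf + la) + 7 ∧
      (1 ≤ pd → 2 ≤ pf) ∧
      (1 ≤ la → 1 ≤ pf + pd))
    ↔ (pf, pd, lf, la) ∈ ({(1,0,4,0), (1,0,3,2), (1,0,2,4), (1,0,1,6),
        (1,0,0,8), (2,0,2,1), (2,0,1,3), (2,0,0,5), (3,0,1,0), (3,0,0,2),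
        (2,1,1,1), (2,1,0,3), (3,1,0,0), (2,2,0,1)} :
        Set (ℕ × ℕ × ℕ × ℕ)) := by
  simp only [Set.mem_insert_iff, Set.mem_singleton_iff, Prod.mk.injEq]
  constructor
  · rintro ⟨h, hd, ha⟩
    have h1 : pf ≤ 3 := by omega
    have h2 : pd ≤ 2 := by omega
    have h3 : lf ≤ 4 := by omega
    have h4 : la ≤ 8 := by omega
    interval_cases pf <;> interval_cases pd <;> interval_cases lf <;>
      interval_cases la <;> first | (exfalso; omega) | decide
  · intro H
    omega
end

section
/- Every balanced point-line problem with at least three cameras has at most four points: for all natural numbers m ≥ 3 and p_f, p_d, l_f, l_a satisfying the balance equation 3·p_f + p_d + 4·l_f + 2·l_a + 6·m = m·(2·p_f + p_d + 2·l_f + l_a) + 7 and the constraint that p_d ≥ 1 implies p_f ≥ 2, one has p_f + p_d ≤ 4. -/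
/-- Every balanced point-line problem with at least three cameras has at most
four points. -/
theorem balanced_three_or_more_cameras_at_most_four_points
    (m pf pd lf la : ℕ) (hm : 3 ≤ m)
    (hbal : 3 * pf + pd + 4 * lf + 2 * la + 6 * m
      = m * (2 * pf + pd + 2 * lf + la) + 7)
    (hdep : 1 ≤ pd → 2 ≤ pf) :
    pf + pd ≤ 4 := by
  by_contra hc
  push_neg at hc
  obtain ⟨k, rfl⟩ : ∃ k, m = k + 3 := ⟨m - 3, by omega⟩
  have hb : (6:ℤ)*k + 11 = k*(2*pf+pd+2*lf+la) + 3*pf + 2*pd + 2*lf + la := by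
    have h := hbal; zify at h; linear_combination h
  have hk : (0:ℤ) ≤ (k:ℤ) := by positivity
  have hlf : (0:ℤ) ≤ (lf:ℤ) := by positivity
  have hla : (0:ℤ) ≤ (la:ℤ) := by positivity
  have hklf : (0:ℤ) ≤ (k:ℤ)*lf := mul_nonneg hk hlf
  have hkla : (0:ℤ) ≤ (k:ℤ)*la := mul_nonneg hk hla
  rcases Nat.eq_zero_or_pos pd with h0 | h1
  · subst h0
    have h5 : (5:ℤ) ≤ (pf:ℤ) := by exact_mod_cast (by omega : 5 ≤ pf)
    have : (k:ℤ)*5 ≤ k*pf := mul_le_mul_of_nonneg_left h5 hk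
    push_cast at hb
    nlinarith [hb, this]
  · have h2 := hdep h1
    rcases Nat.lt_or_ge pf 3 with h3 | h3
    · -- pf = 2, pd ≥ 3
      have hpf : pf = 2 := by omega
      subst hpf
      have hpd : (3:ℤ) ≤ (pd:ℤ) := by exact_mod_cast (by omega : 3 ≤ pd)
      have : (k:ℤ)*3 ≤ k*pd := mul_le_mul_of_nonneg_left hpd hk
      nlinarith [hb, this]
    · rcases Nat.lt_or_ge pf 4 with h4 | h4
      · have hpf : pf = 3 := by omega
        subst hpf
        have hpd : (2:ℤ) ≤ (pd:ℤ) := by exact_mod_cast (by omega : 2 ≤ pd)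
        have : (k:ℤ)*2 ≤ k*pd := mul_le_mul_of_nonneg_left hpd hk
        nlinarith [hb, this]
      · have hpf : (4:ℤ) ≤ (pf:ℤ) := by exact_mod_cast h4
        have hpd : (1:ℤ) ≤ (pd:ℤ) := by exact_mod_cast h1
        have t1 : (k:ℤ)*4 ≤ k*pf := mul_le_mul_of_nonneg_left hpf hk
        have t2 : (k:ℤ)*1 ≤ k*pd := mul_le_mul_of_nonneg_left hpd hk
        nlinarith [hb, t1, t2]
end

section
/- Every balanced point-line problem with four cameras has either exactly one point or exactly three points: for m = 4 and all natural numbers p_f, p_d, l_f, l_a satisfying the balance equation 3·p_f + p_d + 4·l_f + 2·l_a + 6·m = m·(2·p_f + p_d + 2·l_f + l_a) + 7 and the constraints (p_d ≥ 1 → p_f ≥ 2) and (l_a ≥ 1 → p_f + p_d ≥ 1), one has p_f + p_d = 1 or p_f + p_d = 3. -/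
/-- Every balanced point-line problem with four cameras has either exactly one
point or exactly three points. -/
theorem balanced_four_cameras_points (pf pd lf la : ℕ)
    (hbal : 3 * pf + pd + 4 * lf + 2 * la + 6 * 4
      = 4 * (2 * pf + pd + 2 * lf + la) + 7)
    (hdep : 1 ≤ pd → 2 ≤ pf)
    (hadj : 1 ≤ la → 1 ≤ pf + pd) :
    pf + pd = 1 ∨ pf + pd = 3 := by
  omega
end
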